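/- Let F be a continuous cdf on ℝ with finite mean, and let r ≥ 2. Then the r-th L-moment admits the representation λ_r = −∫_ℝ K_r(F(x)) dF^{-1}(x) = −∫₀¹ K_r(t) dF^{-1}(t), equivalently λ_r = ∫_ℝ L_{r-1}(F(x))·x dF(x), where K_r is the integrated shifted Legendre polynomial. -/

import Mathlib

/-!
Under the quantile transform `u ↦ F⁻¹(u)`, Lebesgue measure on `(0, 1)` is pushed forward to `μ`,
and `F (F⁻¹ u) = u` because `F` is continuous; this is the second formula.

For the first, write `F⁻¹(u) = ∫ (𝟙{0 < x < F⁻¹ u} - 𝟙{F⁻¹ u ≤ x ≤ 0}) dx` and exchange the order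
of integration, which is legitimate since `E|X| < ∞` and `L_{r-1}` is bounded on `[0, 1]`.
As `x < F⁻¹ u ↔ F x < u`, the inner integral over `u` is `∫_{F x}^1 L_{r-1}` for `x > 0` and
`-∫_0^{F x} L_{r-1}` for `x ≤ 0`; both equal `-K_r(F x)` because `∫_0^1 L_{r-1} = 0` for `r ≥ 2`.
-/

open MeasureTheory Set

/-- The shifted Legendre polynomial `L_r(u) = Σ_{k=0}^r (−1)^{r−k} C(r,k) C(r+k,k) u^k`. -/
noncomputable def shiftedLegendre (r : ℕ) (u : ℝ) : ℝ :=
  ∑ k ∈ Finset.range (r + 1),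
    (-1 : ℝ) ^ (r - k) * (r.choose k) * ((r + k).choose k) * u ^ k

/-- The integrated shifted Legendre polynomial `K_r(t) = ∫₀ᵗ L_{r−1}(u) du`. -/
noncomputable def intLegendre (r : ℕ) (t : ℝ) : ℝ :=
  ∫ u in (0:ℝ)..t, shiftedLegendre (r - 1) u

open ProbabilityTheory Filter Topology
open scoped Polynomial
open Polynomial (X derivative)

theorem Polynomial.eval_iterate_derivative_eq_zero_of_pow_dvd {R : Type*} [CommRing R]
    {p : R[X]} {a : R} {m k : ℕ} (hk : k < m) (h : (X - Polynomial.C a) ^ m ∣ p) :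
    (derivative^[k] p).eval a = 0 := by
  obtain ⟨q, hq⟩ := Polynomial.pow_sub_dvd_iterate_derivative_of_pow_dvd k h
  rw [hq, Polynomial.eval_mul, Polynomial.eval_pow, Polynomial.eval_sub, Polynomial.eval_X,
    Polynomial.eval_C, sub_self, zero_pow (Nat.sub_ne_zero_of_lt hk), zero_mul]

theorem shiftedLegendre_eq_neg_one_pow_mul_eval (m : ℕ) (u : ℝ) :
    shiftedLegendre m u =
      (-1) ^ m * ((Polynomial.shiftedLegendre m).map (Int.castRingHom ℝ)).eval u := by
  simp only [shiftedLegendre, Polynomial.shiftedLegendre, Polynomial.map_sum,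
    Polynomial.eval_finsetSum, Finset.mul_sum]
  refine Finset.sum_congr rfl fun k hk => ?_
  have hkm : k ≤ m := Nat.lt_succ_iff.mp (Finset.mem_range.mp hk)
  have hsign : (-1 : ℝ) ^ m = (-1) ^ (m - k) * (-1) ^ k := by
    rw [← pow_add, Nat.sub_add_cancel hkm]
  have hsq : ((-1 : ℝ) ^ k) ^ 2 = 1 := by rw [← pow_mul, pow_mul', neg_one_sq, one_pow]
  simp only [eq_intCast, Int.cast_mul, Int.cast_pow, Int.cast_neg, Int.cast_one, Int.cast_natCast,
    Polynomial.map_mul, Polynomial.map_pow, Polynomial.map_neg, Polynomial.map_one,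
    Polynomial.map_natCast, Polynomial.map_X, Polynomial.eval_mul, Polynomial.eval_pow,
    Polynomial.eval_neg, Polynomial.eval_one, Polynomial.eval_natCast, Polynomial.eval_X]
  rw [Nat.choose_symm_add, hsign]
  linear_combination (-(-1) ^ (m - k) * (m.choose k : ℝ) * ((m + k).choose k) * u ^ k) * hsq

theorem continuous_shiftedLegendre (m : ℕ) : Continuous (shiftedLegendre m) := by
  unfold shiftedLegendre
  fun_prop

/-- By Rodrigues' formula `m! L_m = ± (d/du)^m (u^m (1-u)^m)`, and the `(m-1)`-st derivative
of `u^m (1-u)^m` vanishes at both endpoints. -/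
theorem integral_shiftedLegendre_eq_zero {m : ℕ} (hm : m ≠ 0) :
    ∫ u in (0 : ℝ)..1, shiftedLegendre m u = 0 := by
  set g : ℝ[X] := X ^ m * (1 - X) ^ m
  have rodrigues :
      (m.factorial : ℝ[X]) * (Polynomial.shiftedLegendre m).map (Int.castRingHom ℝ) =
        derivative^[m] g := by
    simpa [g, ← Polynomial.iterate_derivative_map] using
      congrArg (Polynomial.map (Int.castRingHom ℝ)) (Polynomial.factorial_mul_shiftedLegendre_eq m)
  have hlt : m - 1 < m := Nat.sub_lt (Nat.pos_of_ne_zero hm) one_pos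
  have h0 : (derivative^[m - 1] g).eval 0 = 0 :=
    Polynomial.eval_iterate_derivative_eq_zero_of_pow_dvd hlt
      (by rw [map_zero, sub_zero]; exact dvd_mul_right _ _)
  have h1 : (derivative^[m - 1] g).eval 1 = 0 := by
    refine Polynomial.eval_iterate_derivative_eq_zero_of_pow_dvd hlt
      ((pow_dvd_pow_of_dvd ?_ m).trans (dvd_mul_left _ _))
    rw [map_one, ← neg_sub, neg_dvd]
  have hderiv : ∀ u, HasDerivAt (fun u => (derivative^[m - 1] g).eval u)
      ((derivative^[m] g).eval u) u := fun u => by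
    simpa [← Function.iterate_succ_apply' derivative,
      Nat.sub_add_cancel (Nat.one_le_iff_ne_zero.mpr hm)]
      using Polynomial.hasDerivAt (derivative^[m - 1] g) u
  have hfact : (m.factorial : ℝ) ≠ 0 := by positivity
  calc ∫ u in (0 : ℝ)..1, shiftedLegendre m u
      = (-1) ^ m / m.factorial * ∫ u in (0 : ℝ)..1, (derivative^[m] g).eval u := by
        rw [← intervalIntegral.integral_const_mul]
        refine intervalIntegral.integral_congr fun u _ => ?_
        rw [shiftedLegendre_eq_neg_one_pow_mul_eval, ← rodrigues]
        simp only [Polynomial.eval_mul, Polynomial.eval_natCast]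
        field_simp
    _ = 0 := by
        rw [intervalIntegral.integral_eq_sub_of_hasDerivAt (fun u _ => hderiv u)
          ((Polynomial.continuous _).intervalIntegrable _ _), h0, h1, sub_zero, mul_zero]

theorem Iic_inter_Ioo_ae_eq_Ioc {α : Type*} [MeasurableSpace α] [LinearOrder α]
    {ν : Measure α} [NullSingletonClass ν] {a b t : α} (ht : t ≤ b) :
    (Iic t ∩ Ioo a b : Set α) =ᵐ[ν] Ioc a t := by
  rw [← show Iic t ∩ Ioc a b = Ioc a t by rw [inter_comm, Ioc_inter_Iic, min_eq_right ht]]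
  exact (ae_eq_refl _).inter Ioo_ae_eq_Ioc

section IntervalIndicator

variable {E : Type*} [NormedAddCommGroup E] [NormedSpace ℝ E] {f : ℝ → E} {a b t : ℝ}

theorem setIntegral_Ioo_indicator_Ioi (hat : a ≤ t) (htb : t ≤ b) :
    ∫ u in Ioo a b, (Ioi t).indicator f u = ∫ u in t..b, f u := by
  rw [integral_indicator measurableSet_Ioi, Measure.restrict_restrict measurableSet_Ioi,
    Ioi_inter_Ioo, max_eq_left hat, ← integral_Ioc_eq_integral_Ioo,
    intervalIntegral.integral_of_le htb]

theorem setIntegral_Ioo_indicator_Iic (hat : a ≤ t) (htb : t ≤ b) :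
    ∫ u in Ioo a b, (Iic t).indicator f u = ∫ u in a..t, f u := by
  rw [integral_indicator measurableSet_Iic, Measure.restrict_restrict measurableSet_Iic,
    setIntegral_congr_set (Iic_inter_Ioo_ae_eq_Ioc htb), intervalIntegral.integral_of_le hat]

end IntervalIndicator

noncomputable def signedLayer (q x : ℝ) : ℝ :=
  (Ioo 0 q).indicator 1 x - (Icc q 0).indicator 1 x

theorem abs_signedLayer (q x : ℝ) :
    |signedLayer q x| = (Ioo 0 q).indicator 1 x + (Icc q 0).indicator 1 x := by
  by_cases h₁ : x ∈ Ioo 0 q <;> by_cases h₂ : x ∈ Icc q 0 <;> simp [signedLayer, h₁, h₂]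
  exact absurd h₂.2 (not_le.mpr h₁.1)

theorem integrable_indicator_Ioo_one (a b : ℝ) :
    Integrable ((Ioo a b).indicator (1 : ℝ → ℝ)) :=
  (integrableOn_const measure_Ioo_lt_top.ne).integrable_indicator measurableSet_Ioo

theorem integrable_indicator_Icc_one (a b : ℝ) :
    Integrable ((Icc a b).indicator (1 : ℝ → ℝ)) :=
  (integrableOn_const measure_Icc_lt_top.ne).integrable_indicator measurableSet_Icc

theorem integrable_signedLayer (q : ℝ) : Integrable (signedLayer q) :=
  (integrable_indicator_Ioo_one 0 q).sub (integrable_indicator_Icc_one q 0)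

theorem integral_signedLayer (q : ℝ) : ∫ x, signedLayer q x = q := by
  unfold signedLayer
  rw [integral_sub (integrable_indicator_Ioo_one 0 q) (integrable_indicator_Icc_one q 0),
    integral_indicator_one measurableSet_Ioo, integral_indicator_one measurableSet_Icc,
    Real.volume_real_Ioo, Real.volume_real_Icc, sub_zero, zero_sub,
    max_zero_sub_max_neg_zero_eq_self]

theorem integral_abs_signedLayer (q : ℝ) : ∫ x, |signedLayer q x| = |q| := by
  simp_rw [abs_signedLayer]
  rw [integral_add (integrable_indicator_Ioo_one 0 q) (integrable_indicator_Icc_one q 0),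
    integral_indicator_one measurableSet_Ioo, integral_indicator_one measurableSet_Icc,
    Real.volume_real_Ioo, Real.volume_real_Icc, sub_zero, zero_sub,
    max_zero_add_max_neg_zero_eq_abs_self]

theorem measurable_signedLayer : Measurable (Function.uncurry signedLayer) := by
  have hIoo : MeasurableSet {p : ℝ × ℝ | 0 < p.2 ∧ p.2 < p.1} :=
    (measurableSet_lt measurable_const measurable_snd).inter
      (measurableSet_lt measurable_snd measurable_fst)
  have hIcc : MeasurableSet {p : ℝ × ℝ | p.1 ≤ p.2 ∧ p.2 ≤ 0} :=
    (measurableSet_le measurable_fst measurable_snd).inter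
      (measurableSet_le measurable_snd measurable_const)
  exact (measurable_const.indicator hIoo).sub (measurable_const.indicator hIcc)

theorem integral_mul_eq_integral_integral_signedLayer {α : Type*} [MeasurableSpace α]
    {ν : Measure α} [SFinite ν] {Q g : α → ℝ} {C : ℝ} (hQ : Integrable Q ν)
    (hg : AEStronglyMeasurable g ν) (hgC : ∀ᵐ u ∂ν, ‖g u‖ ≤ C) :
    ∫ u, Q u * g u ∂ν = ∫ x, ∫ u, signedLayer (Q u) x * g u ∂ν := by
  set f : α → ℝ → ℝ := fun u x => signedLayer (Q u) x * g u
  have hmeas : AEStronglyMeasurable (Function.uncurry f) (ν.prod volume) :=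
    (measurable_signedLayer.comp_aemeasurable
      (hQ.aemeasurable.comp_fst.prodMk measurable_snd.aemeasurable)).aestronglyMeasurable.mul
      hg.comp_fst
  have hint : Integrable (Function.uncurry f) (ν.prod volume) := by
    refine (integrable_prod_iff hmeas).2
      ⟨ae_of_all _ fun u => (integrable_signedLayer (Q u)).mul_const (g u), ?_⟩
    simp only [f, Function.uncurry_apply_pair, norm_mul, Real.norm_eq_abs, integral_mul_const,
      integral_abs_signedLayer]
    exact hQ.abs.mul_bdd hg.norm (by simpa only [Real.norm_eq_abs, abs_abs] using hgC)
  calc ∫ u, Q u * g u ∂ν = ∫ u, (∫ x, f u x) ∂ν := by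
        simp_rw [f, integral_mul_const, integral_signedLayer]
    _ = ∫ x, ∫ u, f u x ∂ν := integral_integral_swap hint

/-- `F⁻¹(u)`. Only `u ∈ (0, 1)` is meaningful: otherwise the set may be empty or unbounded below,
and `sInf` returns a junk value. -/
noncomputable def quantile (F : ℝ → ℝ) (u : ℝ) : ℝ := sInf {x | u ≤ F x}

section Quantile

variable {μ : Measure ℝ} {u : ℝ}

theorem bddBelow_setOf_le_cdf (hu : 0 < u) : BddBelow {x | u ≤ cdf μ x} := by
  obtain ⟨b, hb⟩ := ((tendsto_cdf_atBot μ).eventually_lt_const hu).exists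
  exact ⟨b, fun x hx => le_of_lt <| lt_of_not_ge fun hxb =>
    (hx.trans (monotone_cdf μ hxb)).not_gt hb⟩

theorem nonempty_setOf_le_cdf (hu : u < 1) : {x | u ≤ cdf μ x}.Nonempty :=
  ((tendsto_cdf_atTop μ).eventually_const_le hu).exists

theorem le_cdf_quantile (hu : u ∈ Ioo 0 1) : u ≤ cdf μ (quantile (cdf μ) u) := by
  have hright : ∀ x ∈ Ioi (quantile (cdf μ) u), u ≤ cdf μ x := fun x hx => by
    obtain ⟨y, hy, hyx⟩ := exists_lt_of_csInf_lt (nonempty_setOf_le_cdf hu.2) hx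
    exact hy.trans (monotone_cdf μ hyx.le)
  exact ge_of_tendsto (((cdf μ).right_continuous _).mono Ioi_subset_Ici_self)
    (eventually_nhdsWithin_of_forall hright)

theorem quantile_le_iff (hu : u ∈ Ioo 0 1) {x : ℝ} :
    quantile (cdf μ) u ≤ x ↔ u ≤ cdf μ x :=
  ⟨fun h => (le_cdf_quantile hu).trans (monotone_cdf μ h),
    fun h => csInf_le (bddBelow_setOf_le_cdf hu.1) h⟩

theorem cdf_quantile (hμ : Continuous (cdf μ)) (hu : u ∈ Ioo 0 1) :
    cdf μ (quantile (cdf μ) u) = u := by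
  refine le_antisymm ?_ (le_cdf_quantile hu)
  have hleft : ∀ x ∈ Iio (quantile (cdf μ) u), cdf μ x ≤ u := fun x hx =>
    (lt_of_not_ge fun h => (not_le.mpr hx) ((quantile_le_iff hu).mpr h)).le
  exact le_of_tendsto (hμ.continuousAt.tendsto.mono_left nhdsWithin_le_nhds)
    (eventually_nhdsWithin_of_forall hleft)

theorem monotoneOn_quantile : MonotoneOn (quantile (cdf μ)) (Ioo 0 1) := fun _ hu _ hv huv =>
  csInf_le_csInf (bddBelow_setOf_le_cdf hu.1) (nonempty_setOf_le_cdf hv.2) fun _ hx => huv.trans hx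

theorem aemeasurable_quantile : AEMeasurable (quantile (cdf μ)) (volume.restrict (Ioo 0 1)) :=
  aemeasurable_restrict_of_monotoneOn measurableSet_Ioo monotoneOn_quantile

variable [IsProbabilityMeasure μ]

theorem map_quantile : (volume.restrict (Ioo 0 1)).map (quantile (cdf μ)) = μ := by
  refine (Measure.ext_of_Iic _ _ fun x => ?_).symm
  have hpre : quantile (cdf μ) ⁻¹' Iic x ∩ Ioo 0 1 = Iic (cdf μ x) ∩ Ioo 0 1 := by
    ext u
    simp only [mem_inter_iff, mem_preimage, mem_Iic]
    exact and_congr_left (quantile_le_iff ·)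
  rw [Measure.map_apply_of_aemeasurable aemeasurable_quantile measurableSet_Iic,
    Measure.restrict_apply' measurableSet_Ioo, hpre,
    measure_congr (Iic_inter_Ioo_ae_eq_Ioc (cdf_le_one μ x)), Real.volume_Ioc, sub_zero,
    ofReal_cdf]

theorem integrable_quantile (hμ : Integrable id μ) :
    Integrable (quantile (cdf μ)) (volume.restrict (Ioo 0 1)) := by
  rw [← map_quantile (μ := μ)] at hμ
  exact (integrable_map_measure hμ.aestronglyMeasurable aemeasurable_quantile).1 hμ

end Quantile

theorem setIntegral_signedLayer_quantile_mul {μ : Measure ℝ} {g : ℝ → ℝ} (hg : Continuous g)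
    (hg₀ : ∫ u in (0 : ℝ)..1, g u = 0) (x : ℝ) :
    ∫ u in Ioo 0 1, signedLayer (quantile (cdf μ) u) x * g u = -∫ u in 0..cdf μ x, g u := by
  have hlayer : ∀ u ∈ Ioo (0 : ℝ) 1, signedLayer (quantile (cdf μ) u) x * g u =
      if 0 < x then (Ioi (cdf μ x)).indicator g u else -(Iic (cdf μ x)).indicator g u := by
    intro u hu
    have hlt : x < quantile (cdf μ) u ↔ cdf μ x < u := by
      rw [← not_le, ← not_le, quantile_le_iff hu]
    by_cases hx : 0 < x
    · simp [signedLayer, indicator, hx, hlt, not_le.mpr hx]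
    · simp [signedLayer, indicator, hx, quantile_le_iff hu, not_lt.mp hx]
  rw [setIntegral_congr_fun measurableSet_Ioo hlayer]
  split_ifs
  · rw [setIntegral_Ioo_indicator_Ioi (cdf_nonneg μ x) (cdf_le_one μ x),
      ← intervalIntegral.integral_interval_sub_left (hg.intervalIntegrable 0 1)
        (hg.intervalIntegrable 0 _), hg₀, zero_sub]
  · rw [integral_neg, setIntegral_Ioo_indicator_Iic (cdf_nonneg μ x) (cdf_le_one μ x)]

/-- For a continuous cdf `F` with finite mean and `r ≥ 2`, the r-th L-moment
`λ_r = ∫₀¹ F⁻¹(u)L_{r−1}(u)du` admits the representations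
`λ_r = −∫ K_r(F(x)) dF⁻¹` (i.e. `−∫_ℝ K_r(F(x)) dx` after the change of variables) and
`λ_r = ∫ L_{r−1}(F(x))·x dF(x)`. -/
theorem stmt_16 (μ : Measure ℝ) [IsProbabilityMeasure μ]
    (F : ℝ → ℝ) (hF : ∀ x, F x = (μ (Iic x)).toReal) (hFcont : Continuous F)
    (hmean : Integrable (fun x => |x|) μ)
    (r : ℕ) (hr : 2 ≤ r)
    (lam : ℝ)
    (hlam : lam = ∫ u in Ioo (0:ℝ) 1, (sInf {x | u ≤ F x}) * shiftedLegendre (r - 1) u) :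
    lam = -∫ x, intLegendre r (F x) ∧
    lam = ∫ x, shiftedLegendre (r - 1) (F x) * x ∂μ := by
  obtain rfl : F = cdf μ := funext fun x => by rw [hF, cdf_eq_real, measureReal_def]
  replace hlam : lam = ∫ u in Ioo 0 1, quantile (cdf μ) u * shiftedLegendre (r - 1) u := hlam
  have hL := continuous_shiftedLegendre (r - 1)
  have hQ := integrable_quantile (μ := μ)
    (hmean.mono' aestronglyMeasurable_id (ae_of_all _ fun _ => le_rfl))
  obtain ⟨C, hC⟩ := isCompact_Icc.exists_bound_of_continuousOn (hL.continuousOn (s := Icc 0 1))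
  have hLC : ∀ᵐ u ∂(volume.restrict (Ioo (0 : ℝ) 1)), ‖shiftedLegendre (r - 1) u‖ ≤ C :=
    (ae_restrict_mem measurableSet_Ioo).mono fun u hu => hC u (Ioo_subset_Icc_self hu)
  refine ⟨?_, ?_⟩
  · rw [hlam, integral_mul_eq_integral_integral_signedLayer hQ hL.aestronglyMeasurable hLC,
      ← integral_neg]
    exact integral_congr_ae (ae_of_all _ fun x => setIntegral_signedLayer_quantile_mul hL
      (integral_shiftedLegendre_eq_zero (by omega)) x)
  · have hmap := integral_map (aemeasurable_quantile (μ := μ))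
      (f := fun x => shiftedLegendre (r - 1) (cdf μ x) * x)
      ((hL.comp hFcont).mul continuous_id).aestronglyMeasurable
    rw [map_quantile] at hmap
    rw [hlam, hmap]
    refine setIntegral_congr_fun measurableSet_Ioo fun u hu => ?_
    rw [cdf_quantile hFcont hu, mul_comm]
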